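/- arXiv:1111.4489 — 4 statements merged into one kernel-verified Lean document; each statement's English description precedes it below -/
import Mathlib

section
/- For all a,b,c ∈ ℂ, the quartic X_{a,b,c} is smooth if and only if a²+b²+c²−abc ≠ 4, a² ≠ 4, b² ≠ 4 and c² ≠ 4. -/
open MvPolynomial Matrix Complex

noncomputable section

/-- The quartic polynomial F_{a,b,c}. -/
def quarticF (a b c : ℂ) : MvPolynomial (Fin 3) ℂ :=
  X 0 ^ 4 + X 1 ^ 4 + X 2 ^ 4 + C a * X 0 ^ 2 * X 1 ^ 2 +
    C b * X 0 ^ 2 * X 2 ^ 2 + C c * X 1 ^ 2 * X 2 ^ 2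

/-- Smoothness of a plane curve. -/
def IsSmoothPlaneCurve (P : MvPolynomial (Fin 3) ℂ) : Prop :=
  ¬ ∃ v : Fin 3 → ℂ, v ≠ 0 ∧ eval v P = 0 ∧ ∀ i : Fin 3, eval v (pderiv i P) = 0

/-- The zero locus in ℙ²(ℂ). -/
def zeroLocus (P : MvPolynomial (Fin 3) ℂ) : Set (Projectivization ℂ (Fin 3 → ℂ)) :=
  {p | eval p.rep P = 0}

/-- The projective action of an invertible matrix on ℙ²(ℂ). -/
def projAction (A : GL (Fin 3) ℂ) (p : Projectivization ℂ (Fin 3 → ℂ)) :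
    Projectivization ℂ (Fin 3 → ℂ) :=
  Projectivization.mk ℂ ((A : Matrix (Fin 3) (Fin 3) ℂ) *ᵥ p.rep) (by
    intro h
    apply p.rep_nonzero
    have h2 := congrArg (fun w => ((A⁻¹ : GL (Fin 3) ℂ) : Matrix (Fin 3) (Fin 3) ℂ) *ᵥ w) h
    simp only [Matrix.mulVec_mulVec] at h2
    have h3 : ((A⁻¹ : GL (Fin 3) ℂ) : Matrix (Fin 3) (Fin 3) ℂ) *
        ((A : GL (Fin 3) ℂ) : Matrix (Fin 3) (Fin 3) ℂ) = 1 := by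
      exact_mod_cast A.inv_mul
    rw [h3] at h2
    simpa using h2)

/-- `A` maps `S` bijectively onto `T` via its projective action. -/
def MapsOnto (A : GL (Fin 3) ℂ)
    (S T : Set (Projectivization ℂ (Fin 3 → ℂ))) : Prop :=
  Set.BijOn (projAction A) S T

lemma evalF (a b c : ℂ) (v : Fin 3 → ℂ) :
    eval v (quarticF a b c) =
      v 0^4 + v 1^4 + v 2^4 + a * v 0^2 * v 1^2 + b * v 0^2*v 2^2 + c*v 1^2*v 2^2 := by
  simp [quarticF]

lemma evalD0 (a b c : ℂ) (v : Fin 3 → ℂ) :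
    eval v (pderiv 0 (quarticF a b c)) = 4*v 0^3 + 2*a*v 0*v 1^2 + 2*b*v 0*v 2^2 := by
  simp [quarticF]; ring

lemma evalD1 (a b c : ℂ) (v : Fin 3 → ℂ) :
    eval v (pderiv 1 (quarticF a b c)) = 4*v 1^3 + 2*a*v 0^2*v 1 + 2*c*v 1*v 2^2 := by
  simp [quarticF]; ring

lemma evalD2 (a b c : ℂ) (v : Fin 3 → ℂ) :
    eval v (pderiv 2 (quarticF a b c)) = 4*v 2^3 + 2*b*v 0^2*v 2 + 2*c*v 1^2*v 2 := by
  simp [quarticF]; ring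

lemma sing_a (a b c : ℂ) (ha : a ^ 2 = 4) :
    ∃ v : Fin 3 → ℂ, v ≠ 0 ∧ eval v (quarticF a b c) = 0 ∧
      ∀ i : Fin 3, eval v (pderiv i (quarticF a b c)) = 0 := by
  obtain ⟨t, ht⟩ := IsAlgClosed.exists_pow_nat_eq (k := ℂ) (-a/2) two_pos
  refine ⟨![1, t, 0], ?_, ?_, ?_⟩
  · intro h
    have := congrFun h 0
    simp at this
  · rw [evalF]; simp only [Matrix.cons_val_zero, Matrix.cons_val_one, Matrix.head_cons,
      Matrix.cons_val_two, Matrix.tail_cons]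
    linear_combination (t^2 + a/2)*ht - (1/4)*ha
  · intro i
    fin_cases i
    · show eval _ (pderiv 0 _) = 0
      rw [evalD0]; simp only [Matrix.cons_val_zero, Matrix.cons_val_one, Matrix.head_cons,
        Matrix.cons_val_two, Matrix.tail_cons]
      linear_combination 2*a*ht - ha
    · show eval _ (pderiv 1 _) = 0
      rw [evalD1]; simp only [Matrix.cons_val_zero, Matrix.cons_val_one, Matrix.head_cons,
        Matrix.cons_val_two, Matrix.tail_cons]
      linear_combination 4*t*ht
    · show eval _ (pderiv 2 _) = 0
      rw [evalD2]; simp only [Matrix.cons_val_zero, Matrix.cons_val_one, Matrix.head_cons,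
        Matrix.cons_val_two, Matrix.tail_cons]
      ring

lemma sing_b (a b c : ℂ) (hb : b ^ 2 = 4) :
    ∃ v : Fin 3 → ℂ, v ≠ 0 ∧ eval v (quarticF a b c) = 0 ∧
      ∀ i : Fin 3, eval v (pderiv i (quarticF a b c)) = 0 := by
  obtain ⟨t, ht⟩ := IsAlgClosed.exists_pow_nat_eq (k := ℂ) (-b/2) two_pos
  refine ⟨![1, 0, t], ?_, ?_, ?_⟩
  · intro h
    have := congrFun h 0
    simp at this
  · rw [evalF]; simp only [Matrix.cons_val_zero, Matrix.cons_val_one, Matrix.head_cons,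
      Matrix.cons_val_two, Matrix.tail_cons]
    linear_combination (t^2 + b/2)*ht - (1/4)*hb
  · intro i
    fin_cases i
    · show eval _ (pderiv 0 _) = 0
      rw [evalD0]; simp only [Matrix.cons_val_zero, Matrix.cons_val_one, Matrix.head_cons,
        Matrix.cons_val_two, Matrix.tail_cons]
      linear_combination 2*b*ht - hb
    · show eval _ (pderiv 1 _) = 0
      rw [evalD1]; simp only [Matrix.cons_val_zero, Matrix.cons_val_one, Matrix.head_cons,
        Matrix.cons_val_two, Matrix.tail_cons]
      ring
    · show eval _ (pderiv 2 _) = 0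
      rw [evalD2]; simp only [Matrix.cons_val_zero, Matrix.cons_val_one, Matrix.head_cons,
        Matrix.cons_val_two, Matrix.tail_cons]
      linear_combination 4*t*ht

lemma sing_c (a b c : ℂ) (hc : c ^ 2 = 4) :
    ∃ v : Fin 3 → ℂ, v ≠ 0 ∧ eval v (quarticF a b c) = 0 ∧
      ∀ i : Fin 3, eval v (pderiv i (quarticF a b c)) = 0 := by
  obtain ⟨t, ht⟩ := IsAlgClosed.exists_pow_nat_eq (k := ℂ) (-c/2) two_pos
  refine ⟨![0, 1, t], ?_, ?_, ?_⟩
  · intro h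
    have := congrFun h 1
    simp at this
  · rw [evalF]; simp only [Matrix.cons_val_zero, Matrix.cons_val_one, Matrix.head_cons,
      Matrix.cons_val_two, Matrix.tail_cons]
    linear_combination (t^2 + c/2)*ht - (1/4)*hc
  · intro i
    fin_cases i
    · show eval _ (pderiv 0 _) = 0
      rw [evalD0]; simp only [Matrix.cons_val_zero, Matrix.cons_val_one, Matrix.head_cons,
        Matrix.cons_val_two, Matrix.tail_cons]
      ring
    · show eval _ (pderiv 1 _) = 0
      rw [evalD1]; simp only [Matrix.cons_val_zero, Matrix.cons_val_one, Matrix.head_cons,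
        Matrix.cons_val_two, Matrix.tail_cons]
      linear_combination 2*c*ht - hc
    · show eval _ (pderiv 2 _) = 0
      rw [evalD2]; simp only [Matrix.cons_val_zero, Matrix.cons_val_one, Matrix.head_cons,
        Matrix.cons_val_two, Matrix.tail_cons]
      linear_combination 4*t*ht

lemma sing_of_det (a b c : ℂ) (h : a^2 + b^2 + c^2 - a*b*c = 4) (hc : c^2 ≠ 4) :
    ∃ v : Fin 3 → ℂ, v ≠ 0 ∧ eval v (quarticF a b c) = 0 ∧
      ∀ i : Fin 3, eval v (pderiv i (quarticF a b c)) = 0 := by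
  obtain ⟨x, hx⟩ := IsAlgClosed.exists_pow_nat_eq (k := ℂ) (4 - c^2) two_pos
  obtain ⟨y, hy⟩ := IsAlgClosed.exists_pow_nat_eq (k := ℂ) (b*c - 2*a) two_pos
  obtain ⟨z, hz⟩ := IsAlgClosed.exists_pow_nat_eq (k := ℂ) (a*c - 2*b) two_pos
  have hx0 : x ≠ 0 := by
    intro h0
    apply hc
    linear_combination hx - x*h0
  refine ⟨![x, y, z], ?_, ?_, ?_⟩
  · intro h0
    exact hx0 (by simpa using congrFun h0 0)
  · rw [evalF]
    simp only [Matrix.cons_val_zero, Matrix.cons_val_one, Matrix.head_cons,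
      Matrix.cons_val_two, Matrix.tail_cons]
    linear_combination (x^2 + 4 - c^2 + a*y^2 + b*z^2)*hx +
      (y^2 + b*c - 2*a + a*(4-c^2) + c*z^2)*hy +
      (z^2 + a*c - 2*b + b*(4-c^2) + c*(b*c-2*a))*hz + (c^2 - 4)*h
  · intro i
    fin_cases i
    · show eval _ (pderiv 0 _) = 0
      rw [evalD0]
      simp only [Matrix.cons_val_zero, Matrix.cons_val_one, Matrix.head_cons,
        Matrix.cons_val_two, Matrix.tail_cons]
      linear_combination 4*x*hx + 2*a*x*hy + 2*b*x*hz - 4*x*h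
    · show eval _ (pderiv 1 _) = 0
      rw [evalD1]
      simp only [Matrix.cons_val_zero, Matrix.cons_val_one, Matrix.head_cons,
        Matrix.cons_val_two, Matrix.tail_cons]
      linear_combination 4*y*hy + 2*a*y*hx + 2*c*y*hz
    · show eval _ (pderiv 2 _) = 0
      rw [evalD2]
      simp only [Matrix.cons_val_zero, Matrix.cons_val_one, Matrix.head_cons,
        Matrix.cons_val_two, Matrix.tail_cons]
      linear_combination 4*z*hz + 2*b*z*hx + 2*c*z*hy

/-- `X_{a,b,c}` is smooth iff `a²+b²+c²−abc ≠ 4`, `a² ≠ 4`, `b² ≠ 4`, `c² ≠ 4`. -/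
theorem statement_0 (a b c : ℂ) :
    IsSmoothPlaneCurve (quarticF a b c) ↔
      a ^ 2 + b ^ 2 + c ^ 2 - a * b * c ≠ 4 ∧ a ^ 2 ≠ 4 ∧ b ^ 2 ≠ 4 ∧ c ^ 2 ≠ 4 := by
  constructor
  · intro hs
    refine ⟨?_, ?_, ?_, ?_⟩
    · intro h
      by_cases hc : c ^ 2 = 4
      · exact hs (sing_c a b c hc)
      · exact hs (sing_of_det a b c h hc)
    · intro h; exact hs (sing_a a b c h)
    · intro h; exact hs (sing_b a b c h)
    · intro h; exact hs (sing_c a b c h)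
  · rintro ⟨h1, h2, h3, h4⟩ ⟨v, hv, hF, hD⟩
    set x := v 0 with hxdef
    set y := v 1 with hydef
    set z := v 2 with hzdef
    have hD0 : 4*x^3 + 2*a*x*y^2 + 2*b*x*z^2 = 0 := by rw [← evalD0 a b c v]; exact hD 0
    have hD1 : 4*y^3 + 2*a*x^2*y + 2*c*y*z^2 = 0 := by rw [← evalD1 a b c v]; exact hD 1
    have hD2 : 4*z^3 + 2*b*x^2*z + 2*c*y^2*z = 0 := by rw [← evalD2 a b c v]; exact hD 2
    have fac0 : x * (4*x^2 + 2*a*y^2 + 2*b*z^2) = 0 := by linear_combination hD0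
    have fac1 : y * (4*y^2 + 2*a*x^2 + 2*c*z^2) = 0 := by linear_combination hD1
    have fac2 : z * (4*z^2 + 2*b*x^2 + 2*c*y^2) = 0 := by linear_combination hD2
    have ha4 : (4:ℂ) - a^2 ≠ 0 := sub_ne_zero_of_ne (Ne.symm h2)
    have hb4 : (4:ℂ) - b^2 ≠ 0 := sub_ne_zero_of_ne (Ne.symm h3)
    have hc4 : (4:ℂ) - c^2 ≠ 0 := sub_ne_zero_of_ne (Ne.symm h4)
    by_cases hx : x = 0 <;> by_cases hy : y = 0 <;> by_cases hz : z = 0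
    · exact hv (funext fun i => by fin_cases i <;> assumption)
    · -- x = y = 0, z ≠ 0
      have : z ^ 3 = 0 := by
        linear_combination (1/4)*hD2 - (b*x*z/2)*hx - (c*y*z/2)*hy
      exact hz (by simpa using pow_eq_zero_iff (n := 3) (by norm_num) |>.mp this)
    · -- x = z = 0, y ≠ 0
      have : y ^ 3 = 0 := by
        linear_combination (1/4)*hD1 - (a*x*y/2)*hx - (c*y*z/2)*hz
      exact hy (by simpa using pow_eq_zero_iff (n := 3) (by norm_num) |>.mp this)
    · -- x = 0, y z ≠ 0
      have E1 : 4*y^2 + 2*a*x^2 + 2*c*z^2 = 0 := by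
        rcases mul_eq_zero.mp fac1 with h | h
        · exact absurd h hy
        · exact h
      have E2 : 4*z^2 + 2*b*x^2 + 2*c*y^2 = 0 := by
        rcases mul_eq_zero.mp fac2 with h | h
        · exact absurd h hz
        · exact h
      have : (4 - c^2) * y^2 = 0 := by
        linear_combination E1 - (c/2)*E2 - (2*a*x - b*c*x)*hx
      exact hy (pow_eq_zero_iff (n := 2) (by norm_num) |>.mp
        ((mul_eq_zero.mp this).resolve_left hc4))
    · -- y = z = 0, x ≠ 0
      have : x ^ 3 = 0 := by
        linear_combination (1/4)*hD0 - (a*x*y/2)*hy - (b*x*z/2)*hz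
      exact hx (by simpa using pow_eq_zero_iff (n := 3) (by norm_num) |>.mp this)
    · -- y = 0, x z ≠ 0
      have E0 : 4*x^2 + 2*a*y^2 + 2*b*z^2 = 0 := (mul_eq_zero.mp fac0).resolve_left hx
      have E2 : 4*z^2 + 2*b*x^2 + 2*c*y^2 = 0 := (mul_eq_zero.mp fac2).resolve_left hz
      have : (4 - b^2) * x^2 = 0 := by
        linear_combination E0 - (b/2)*E2 - (2*a*y - b*c*y)*hy
      exact hx (pow_eq_zero_iff (n := 2) (by norm_num) |>.mp
        ((mul_eq_zero.mp this).resolve_left hb4))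
    · -- z = 0, x y ≠ 0
      have E0 : 4*x^2 + 2*a*y^2 + 2*b*z^2 = 0 := (mul_eq_zero.mp fac0).resolve_left hx
      have E1 : 4*y^2 + 2*a*x^2 + 2*c*z^2 = 0 := (mul_eq_zero.mp fac1).resolve_left hy
      have : (4 - a^2) * x^2 = 0 := by
        linear_combination E0 - (a/2)*E1 - (2*b*z - a*c*z)*hz
      exact hx (pow_eq_zero_iff (n := 2) (by norm_num) |>.mp
        ((mul_eq_zero.mp this).resolve_left ha4))
    · -- x y z all nonzero
      have E0 : 4*x^2 + 2*a*y^2 + 2*b*z^2 = 0 := (mul_eq_zero.mp fac0).resolve_left hx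
      have E1 : 4*y^2 + 2*a*x^2 + 2*c*z^2 = 0 := (mul_eq_zero.mp fac1).resolve_left hy
      have E2 : 4*z^2 + 2*b*x^2 + 2*c*y^2 = 0 := (mul_eq_zero.mp fac2).resolve_left hz
      have key : (a^2 + b^2 + c^2 - a*b*c - 4) * x^2 = 0 := by
        linear_combination ((c^2-4)/4)*E0 + ((2*a-b*c)/4)*E1 + ((2*b-a*c)/4)*E2
      have hne : a^2 + b^2 + c^2 - a*b*c - 4 ≠ 0 := sub_ne_zero_of_ne h1
      exact hx (pow_eq_zero_iff (n := 2) (by norm_num) |>.mp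
        ((mul_eq_zero.mp key).resolve_left hne))

end
end

section
/- Let a,b,c ∈ ℂ with a²,b²,c² pairwise distinct and X_{a,b,c} smooth. Let N := ℚ(a,b,c) and L := ℚ(j₁(a,b,c), j₂(a,b,c), j₃(a,b,c)), subfields of ℂ. Assume i ∈ N, assume the extension N/L is Galois, and assume that for every field automorphism σ of N fixing L pointwise the triple (σ(a),σ(b),σ(c)) is a permutation of (a,b,c). Then there exist a homogeneous degree-4 polynomial Q with all coefficients in L and a matrix A ∈ GL₃(N) whose projective action maps X_{a,b,c} onto the zero locus of Q in ℙ²(ℂ). -/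
/-!
Put `t = (c, b, a)`, so that `F = ∑ xᵢ⁴ + ∑ₖ tₖ ∏_{i ≠ k} xᵢ²`, and let `V = (tₖ^i)ᵢₖ`, which is
invertible over `N` because `a, b, c` are distinct. Then `V` maps `X_{a,b,c}` onto the zero locus
of `Q(x) = F(V⁻¹ x)`. If `σ ∈ Gal(N/L)` permutes `t` by a permutation matrix `P`, then
`σ(V) = V P` and `σ(F)(x) = F(P x)`, so `σ(Q)(x) = F(P P⁻¹ V⁻¹ x) = Q(x)`. Hence `Q` is fixed by
`Gal(N/L)`, and its coefficients lie in `L` because `N/L` is Galois.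
-/

open MvPolynomial Matrix Complex

noncomputable section

namespace MvPolynomial

variable {m n R S : Type*} [CommSemiring R] [CommSemiring S]

section LinearSubstitution

variable [Fintype n]

lemma eval_bind₁_toMvPolynomial (M : Matrix m n R) (P : MvPolynomial m R) (v : n → R) :
    eval v (bind₁ M.toMvPolynomial P) = eval (M *ᵥ v) P := by
  change aeval v (bind₁ M.toMvPolynomial P) = aeval (M *ᵥ v) P
  rw [aeval_bind₁]
  congr 2 with i
  exact M.toMvPolynomial_eval_eq_apply i v

lemma map_bind₁_toMvPolynomial (f : R →+* S) (M : Matrix m n R) (P : MvPolynomial m R) :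
    map f (bind₁ M.toMvPolynomial P) = bind₁ (M.map f).toMvPolynomial (map f P) := by
  rw [map_bind₁]
  exact congrArg (bind₁ · _) (_root_.funext fun i => (M.toMvPolynomial_map f i).symm)

lemma IsHomogeneous.bind₁_toMvPolynomial {P : MvPolynomial m R} {d : ℕ} (hP : P.IsHomogeneous d)
    (M : Matrix m n R) : (bind₁ M.toMvPolynomial P).IsHomogeneous d := by
  simpa using hP.aeval M.toMvPolynomial M.toMvPolynomial_isHomogeneous

lemma bind₁_toMvPolynomial_rename (M : Matrix n n R) (e : m → n) (P : MvPolynomial m R) :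
    bind₁ M.toMvPolynomial (rename e P) = bind₁ (M.submatrix e id).toMvPolynomial P := by
  rw [bind₁_rename]
  rfl

end LinearSubstitution

lemma IsHomogeneous.eval_smul {P : MvPolynomial m R} {d : ℕ} (hP : P.IsHomogeneous d) (u : R)
    (v : m → R) : eval (u • v) P = u ^ d * eval v P := by
  rw [eval_eq, eval_eq, Finset.mul_sum]
  refine Finset.sum_congr rfl fun k hk => ?_
  have hdeg : ∑ i ∈ k.support, k i = d := by
    simpa [Finsupp.weight_apply, Finsupp.sum] using hP (mem_support_iff.mp hk)
  simp only [Pi.smul_apply, smul_eq_mul, mul_pow, Finset.prod_mul_distrib,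
    Finset.prod_pow_eq_pow_sum, hdeg]
  ring

end MvPolynomial

open MvPolynomial

lemma map_bind₁_inv_toMvPolynomial_eq_self {K n : Type*} [CommRing K] [Fintype n] [DecidableEq n]
    (σ : K →+* K) (e : Equiv.Perm n) {A : Matrix n n K} (hA : IsUnit A.det)
    {F : MvPolynomial n K} (hAσ : A.map σ = A.submatrix id e) (hFσ : map σ F = rename e.symm F) :
    map σ (bind₁ A⁻¹.toMvPolynomial F) = bind₁ A⁻¹.toMvPolynomial F := by
  have hinv : A⁻¹.map σ = A⁻¹.submatrix e id := by
    have hleft : A⁻¹.map σ * A.map σ = 1 := by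
      rw [← Matrix.map_mul, Matrix.nonsing_inv_mul A hA, Matrix.map_one _ σ.map_zero σ.map_one]
    rw [← Matrix.inv_eq_left_inv hleft, hAσ]
    simpa using Matrix.inv_submatrix_equiv A (Equiv.refl n) e
  rw [map_bind₁_toMvPolynomial, hFσ, bind₁_toMvPolynomial_rename, hinv, Matrix.submatrix_submatrix]
  simp

section EvenQuartic

variable {n R S : Type*} [Fintype n] [DecidableEq n] [CommSemiring R] [CommSemiring S]

def evenQuartic (t : n → R) : MvPolynomial n R :=
  ∑ i, X i ^ 4 + ∑ k, C (t k) * ∏ i ∈ {k}ᶜ, X i ^ 2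

lemma map_evenQuartic (f : R →+* S) (t : n → R) :
    map f (evenQuartic t) = evenQuartic (f ∘ t) := by
  simp [evenQuartic]

lemma rename_evenQuartic (e : Equiv.Perm n) (t : n → R) :
    rename e (evenQuartic t) = evenQuartic (t ∘ e.symm) := by
  simp only [evenQuartic, map_add, map_sum, map_mul, map_prod, map_pow, rename_X, rename_C]
  congr 1
  · exact Equiv.sum_comp e (X · ^ 4)
  · conv_lhs => rw [← Equiv.sum_comp e.symm]
    refine Finset.sum_congr rfl fun k _ => congrArg _ ?_
    exact Finset.prod_equiv e (by simp [← Equiv.eq_symm_apply]) (by simp)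

end EvenQuartic

lemma quarticF_eq_evenQuartic (a b c : ℂ) : quarticF a b c = evenQuartic ![c, b, a] := by
  have h0 : ({0}ᶜ : Finset (Fin 3)) = {1, 2} := by decide
  have h1 : ({1}ᶜ : Finset (Fin 3)) = {0, 2} := by decide
  have h2 : ({2}ᶜ : Finset (Fin 3)) = {0, 1} := by decide
  simp [quarticF, evenQuartic, Fin.sum_univ_three, h0, h1, h2]
  ring

lemma quarticF_isHomogeneous (a b c : ℂ) : (quarticF a b c).IsHomogeneous 4 := by
  have hX (i : Fin 3) : (X i ^ 4 : MvPolynomial (Fin 3) ℂ).IsHomogeneous 4 :=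
    isHomogeneous_X_pow i 4
  have hM (s : ℂ) (i j : Fin 3) :
      (C s * X i ^ 2 * X j ^ 2 : MvPolynomial (Fin 3) ℂ).IsHomogeneous 4 :=
    ((isHomogeneous_C _ s).mul (isHomogeneous_X_pow i 2)).mul (isHomogeneous_X_pow j 2)
  exact ((((hX 0).add (hX 1)).add (hX 2)).add (hM a 0 1)).add (hM b 0 2) |>.add (hM c 1 2)


lemma MvPolynomial.coeff_mem_range_algebraMap_of_forall_map_eq {k K σ : Type*} [Field k] [Field K]
    [Algebra k K] [IsGalois k K] {P : MvPolynomial σ K}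
    (hP : ∀ τ : K ≃ₐ[k] K, map (τ : K →+* K) P = P) (m : σ →₀ ℕ) :
    P.coeff m ∈ Set.range (algebraMap k K) :=
  (InfiniteGalois.mem_range_algebraMap_iff_fixed _).2 fun τ => by
    rw [← RingHom.coe_coe τ, ← coeff_map, hP]

lemma map_bind₁_inv_vandermonde_evenQuartic {K : Type*} [Field K] {n : ℕ} {t : Fin n → K}
    (ht : Function.Injective t) (σ : K →+* K) (e : Equiv.Perm (Fin n)) (hσ : σ ∘ t = t ∘ e) :
    map σ (bind₁ (vandermonde t)ᵀ⁻¹.toMvPolynomial (evenQuartic t)) =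
      bind₁ (vandermonde t)ᵀ⁻¹.toMvPolynomial (evenQuartic t) := by
  refine map_bind₁_inv_toMvPolynomial_eq_self σ e ?_ ?_ ?_
  · rw [isUnit_iff_ne_zero, det_transpose]
    exact det_vandermonde_ne_zero_iff.2 ht
  · ext i k
    simp only [map_apply, transpose_apply, submatrix_apply, vandermonde_apply, id, map_pow]
    rw [← Function.comp_apply (f := σ), hσ, Function.comp_apply]
  · rw [map_evenQuartic, rename_evenQuartic, hσ, Equiv.symm_symm]

section ProjectivePlane

open Projectivization
open scoped LinearAlgebra.Projectivization

lemma mk_mem_zeroLocus_iff {P : MvPolynomial (Fin 3) ℂ} {d : ℕ} (hP : P.IsHomogeneous d)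
    (v : Fin 3 → ℂ) (hv : v ≠ 0) : mk ℂ v hv ∈ zeroLocus P ↔ eval v P = 0 := by
  obtain ⟨u, hu⟩ := exists_smul_eq_mk_rep ℂ v hv
  simp [_root_.zeroLocus, ← hu, Units.smul_def, hP.eval_smul]

lemma projAction_eq_smul (A : GL (Fin 3) ℂ) (p : ℙ ℂ (Fin 3 → ℂ)) : projAction A p = A • p := by
  conv_rhs => rw [← p.mk_rep, smul_mk]
  rfl

lemma mapsOnto_zeroLocus_bind₁ (A : GL (Fin 3) ℂ) {P : MvPolynomial (Fin 3) ℂ} {d : ℕ}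
    (hP : P.IsHomogeneous d) :
    MapsOnto A (zeroLocus P)
      (zeroLocus (bind₁ (A⁻¹ : Matrix (Fin 3) (Fin 3) ℂ).toMvPolynomial P)) := by
  rw [MapsOnto, show projAction A = MulAction.toPerm A from funext (projAction_eq_smul A)]
  refine (MulAction.toPerm A).bijOn fun p => ?_
  induction p using Projectivization.ind with | _ v hv =>
  rw [MulAction.toPerm_apply, smul_mk, mk_mem_zeroLocus_iff (hP.bind₁_toMvPolynomial _),
    mk_mem_zeroLocus_iff hP, eval_bind₁_toMvPolynomial, Units.smul_def, Matrix.smul_eq_mulVec,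
    Matrix.mulVec_mulVec, ← Matrix.coe_units_inv, Units.inv_mul, Matrix.one_mulVec]

end ProjectivePlane

lemma exists_perm_comp_eq_of_vec_eq {N : Subfield ℂ} {a b c : ℂ} (ha : a ∈ N) (hb : b ∈ N)
    (hc : c ∈ N) (σ : N → N) {e : Equiv.Perm (Fin 3)}
    (he : ![(σ ⟨a, ha⟩ : ℂ), (σ ⟨b, hb⟩ : ℂ), (σ ⟨c, hc⟩ : ℂ)] = ![a, b, c] ∘ e) :
    ∃ e' : Equiv.Perm (Fin 3),
      σ ∘ ![⟨c, hc⟩, ⟨b, hb⟩, ⟨a, ha⟩] = ![⟨c, hc⟩, ⟨b, hb⟩, ⟨a, ha⟩] ∘ e' := by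
  set t : Fin 3 → N := ![⟨c, hc⟩, ⟨b, hb⟩, ⟨a, ha⟩]
  have ht (k : Fin 3) : (t k.rev : ℂ) = ![a, b, c] k := by
    fin_cases k <;> rfl
  have hσt (j : Fin 3) :
      (σ (t j) : ℂ) = ![(σ ⟨a, ha⟩ : ℂ), (σ ⟨b, hb⟩ : ℂ), (σ ⟨c, hc⟩ : ℂ)] j.rev := by
    fin_cases j <;> rfl
  refine ⟨Fin.revPerm.trans (e.trans Fin.revPerm), funext fun j => Subtype.ext ?_⟩
  simp [hσt, he, ← ht]

theorem statement_6_general (a b c : ℂ)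
    (hab : a ^ 2 ≠ b ^ 2) (hac : a ^ 2 ≠ c ^ 2) (hbc : b ^ 2 ≠ c ^ 2)
    (N L : Subfield ℂ)
    (ha : a ∈ N) (hb : b ∈ N) (hc : c ∈ N)
    (hLN : L ≤ N)
    (hGal : @IsGalois L _ N _ (Subfield.inclusion hLN).toAlgebra)
    (hperm : ∀ σ : N ≃+* N, (∀ x : N, (x : ℂ) ∈ L → σ x = x) →
      ∃ e : Equiv.Perm (Fin 3),
        ![(σ ⟨a, ha⟩ : ℂ), (σ ⟨b, hb⟩ : ℂ), (σ ⟨c, hc⟩ : ℂ)] = ![a, b, c] ∘ e) :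
    ∃ Q : MvPolynomial (Fin 3) ℂ, Q.IsHomogeneous 4 ∧
      (∀ m : Fin 3 →₀ ℕ, Q.coeff m ∈ L) ∧
      ∃ A : GL (Fin 3) ℂ, (∀ i j : Fin 3, (A : Matrix (Fin 3) (Fin 3) ℂ) i j ∈ N) ∧
        MapsOnto A (zeroLocus (quarticF a b c)) (zeroLocus Q) := by
  let _ : Algebra L N := (Subfield.inclusion hLN).toAlgebra
  set t : Fin 3 → N := ![⟨c, hc⟩, ⟨b, hb⟩, ⟨a, ha⟩]
  have ht : Function.Injective t := by
    intro i j h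
    fin_cases i <;> fin_cases j <;> simp [t] at h ⊢ <;> subst h <;> contradiction
  have hGalPerm (τ : N ≃ₐ[L] N) : ∃ e : Equiv.Perm (Fin 3), τ ∘ t = t ∘ e :=
    have ⟨_, he⟩ := hperm τ.toRingEquiv fun x hx => τ.commutes ⟨x, hx⟩
    exists_perm_comp_eq_of_vec_eq ha hb hc τ he
  set V : GL (Fin 3) N := .mkOfDetNeZero (vandermonde t)ᵀ
    (by rw [det_transpose]; exact det_vandermonde_ne_zero_iff.2 ht)
  set A : GL (Fin 3) ℂ := .map N.subtype V
  have hQ : map N.subtype (bind₁ (vandermonde t)ᵀ⁻¹.toMvPolynomial (evenQuartic t)) =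
      bind₁ (A⁻¹ : Matrix (Fin 3) (Fin 3) ℂ).toMvPolynomial (quarticF a b c) := by
    have hAinv : (A⁻¹ : Matrix (Fin 3) (Fin 3) ℂ) = (vandermonde t)ᵀ⁻¹.map N.subtype := by
      rw [← Matrix.coe_units_inv, ← GeneralLinearGroup.map_inv, GeneralLinearGroup.val_map_apply,
        Matrix.coe_units_inv, GeneralLinearGroup.val_mkOfDetNeZero]
    have htc : N.subtype ∘ t = ![c, b, a] := by
      funext i; fin_cases i <;> rfl
    rw [map_bind₁_toMvPolynomial, map_evenQuartic, quarticF_eq_evenQuartic, hAinv, htc]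
  refine ⟨_, hQ ▸ (quarticF_isHomogeneous a b c).bind₁_toMvPolynomial _, fun m => ?_,
    A, fun i j => (V i j).2, hQ ▸ mapsOnto_zeroLocus_bind₁ A (quarticF_isHomogeneous a b c)⟩
  obtain ⟨l, hl⟩ := coeff_mem_range_algebraMap_of_forall_map_eq (k := L) (fun τ =>
    have ⟨e, he⟩ := hGalPerm τ; map_bind₁_inv_vandermonde_evenQuartic ht τ e he) m
  rw [coeff_map, ← hl]
  exact l.2

/-- let `N = ℚ(a,b,c)` and `L = ℚ(j₁,j₂,j₃)`.  If `i ∈ N`, `N/L` is Galois, and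
every automorphism of `N` fixing `L` pointwise permutes `a,b,c`, then `X_{a,b,c}` is mapped by
some `A ∈ GL₃(N)` onto the zero locus of a homogeneous quartic with coefficients in `L`. -/
theorem statement_6 (a b c : ℂ)
    (hab : a ^ 2 ≠ b ^ 2) (hac : a ^ 2 ≠ c ^ 2) (hbc : b ^ 2 ≠ c ^ 2)
    (hsm : IsSmoothPlaneCurve (quarticF a b c))
    (N L : Subfield ℂ)
    (hN : N = Subfield.closure {a, b, c})
    (hL : L = Subfield.closure
      {a * b * c, a ^ 2 + b ^ 2 + c ^ 2, a ^ 4 + b ^ 4 + c ^ 4})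
    (ha : a ∈ N) (hb : b ∈ N) (hc : c ∈ N)
    (hiN : Complex.I ∈ N) (hLN : L ≤ N)
    (hGal : @IsGalois L _ N _ (Subfield.inclusion hLN).toAlgebra)
    (hperm : ∀ σ : N ≃+* N, (∀ x : N, (x : ℂ) ∈ L → σ x = x) →
      ∃ e : Equiv.Perm (Fin 3),
        ![(σ ⟨a, ha⟩ : ℂ), (σ ⟨b, hb⟩ : ℂ), (σ ⟨c, hc⟩ : ℂ)] = ![a, b, c] ∘ e) :
    ∃ Q : MvPolynomial (Fin 3) ℂ, Q.IsHomogeneous 4 ∧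
      (∀ m : Fin 3 →₀ ℕ, Q.coeff m ∈ L) ∧
      ∃ A : GL (Fin 3) ℂ, (∀ i j : Fin 3, (A : Matrix (Fin 3) (Fin 3) ℂ) i j ∈ N) ∧
        MapsOnto A (zeroLocus (quarticF a b c)) (zeroLocus Q) :=
  statement_6_general a b c hab hac hbc N L ha hb hc hLN hGal hperm

end
end

section
/- Let q be an odd prime dividing m·n. Then for every x ∈ ℂ∖{0} one has the identity x^{2mn}·f̄(ζ_{2n}^{−1}·x^{−1}) = −f(x). Consequently, if (x,y) ∈ (ℂ∖{0})×ℂ satisfies y^q = f(x), then setting u := ζ_{2n}^{−1}·x^{−1} and v := ζ_{2q}·y·x^{−2mn/q} one has v^q = f̄(u); that is, the map μ(x,y) = (ζ_{2n}^{−1}x^{−1}, ζ_{2q}·y·x^{−2mn/q}) sends the affine curve y^q = f(x) into the conjugate curve y^q = f̄(x). -/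
open Complex Polynomial

noncomputable section

/-- `ζ_r = exp(2πi/r)`, a primitive `r`-th root of unity. -/
def zetaRoot (r : ℕ) : ℂ := Complex.exp (2 * Real.pi * Complex.I / r)

/-!
Write `t = xⁿ` and `bᵢ = āᵢ`. Since `ζ₂ₙⁿ = -1`, the substitution `x ↦ ζ₂ₙ⁻¹x⁻¹` sends `t` to
`-t⁻¹`, and each factor of `f̄` transforms as
`t² (-t⁻¹ - bᵢ)(-t⁻¹ + aᵢ⁻¹) = -(bᵢ/aᵢ) (t - aᵢ)(t + bᵢ⁻¹)`.
The product of the constants `-(bᵢ/aᵢ)` is `f(0)⁻¹ = -1`, which gives the reflection identity.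
For the curves, `ζ₂q^q = -1` supplies the same sign, and `q ∣ 2mn` makes `x^{-2mn/q}` a
genuine `q`-th root of `x^{-2mn}`.
-/

theorem zetaRoot_two_mul_pow_self {r : ℕ} (hr : r ≠ 0) : zetaRoot (2 * r) ^ r = -1 := by
  have hr' : (r : ℂ) ≠ 0 := Nat.cast_ne_zero.mpr hr
  rw [zetaRoot, ← Complex.exp_nat_mul, ← Complex.exp_pi_mul_I]
  congr 1
  push_cast
  field_simp

section Reflection

variable {K : Type*} [Field K]

theorem sq_mul_factor_neg_inv {a b t : K} (ha : a ≠ 0) (hb : b ≠ 0) (ht : t ≠ 0) :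
    t ^ 2 * ((-t⁻¹ - b) * (-t⁻¹ + a⁻¹)) = -(b / a) * ((t - a) * (t + b⁻¹)) := by
  field_simp
  ring

theorem pow_mul_prod_factor_neg_inv {ι : Type*} [Fintype ι] {a b : ι → K}
    (ha : ∀ i, a i ≠ 0) (hb : ∀ i, b i ≠ 0) {t : K} (ht : t ≠ 0) :
    (t ^ 2) ^ Fintype.card ι * ∏ i, (-t⁻¹ - b i) * (-t⁻¹ + (a i)⁻¹)
      = (∏ i, -(b i / a i)) * ∏ i, (t - a i) * (t + (b i)⁻¹) := by
  rw [← Finset.card_univ, ← Finset.prod_const, ← Finset.prod_mul_distrib,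
    ← Finset.prod_mul_distrib]
  exact Finset.prod_congr rfl fun i _ => sq_mul_factor_neg_inv (ha i) (hb i) ht

theorem prod_neg_div_eq_inv_prod_factor_zero {ι : Type*} [Fintype ι] {a b : ι → K}
    (ha : ∀ i, a i ≠ 0) (hb : ∀ i, b i ≠ 0) :
    ∏ i, -(b i / a i) = (∏ i, (0 - a i) * (0 + (b i)⁻¹))⁻¹ := by
  rw [← Finset.prod_inv_distrib]
  refine Finset.prod_congr rfl fun i _ => ?_
  have := ha i
  have := hb i
  field_simp
  ring

end Reflection

theorem pow_eq_of_pow_mul_eq_neg {K : Type*} [Field K] {q k : ℕ} (hqk : q ∣ k)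
    {ζ x y F G : K} (hx : x ≠ 0) (hζ : ζ ^ q = -1) (hy : y ^ q = F) (h : x ^ k * G = -F) :
    (ζ * y * x⁻¹ ^ (k / q)) ^ q = G := by
  rw [mul_pow, mul_pow, hζ, hy, ← pow_mul, Nat.div_mul_cancel hqk, neg_one_mul, ← h, inv_pow]
  field_simp

theorem statement_13_general (m n : ℕ) (hn : 2 ≤ n)
    (a : Fin m → ℂ) (ha : ∀ i, a i ≠ 0)
    (q : ℕ) (hq : Nat.Prime q) (hdvd : q ∣ m * n)
    (f fbar : Polynomial ℂ)
    (hf : f = ∏ i : Fin m,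
      ((Polynomial.X ^ n - Polynomial.C (a i)) *
        (Polynomial.X ^ n + Polynomial.C ((starRingEnd ℂ) (a i))⁻¹)))
    (hfbar : fbar = ∏ i : Fin m,
      ((Polynomial.X ^ n - Polynomial.C ((starRingEnd ℂ) (a i))) *
        (Polynomial.X ^ n + Polynomial.C (a i)⁻¹)))
    (h0 : f.eval 0 = -1) :
    (∀ x : ℂ, x ≠ 0 →
      x ^ (2 * m * n) * fbar.eval ((zetaRoot (2 * n))⁻¹ * x⁻¹) = - f.eval x) ∧
    (∀ x y : ℂ, x ≠ 0 → y ^ q = f.eval x →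
      (zetaRoot (2 * q) * y * x⁻¹ ^ (2 * m * n / q)) ^ q
        = fbar.eval ((zetaRoot (2 * n))⁻¹ * x⁻¹)) := by
  have hn0 : n ≠ 0 := by omega
  have hconj : ∀ i, (starRingEnd ℂ) (a i) ≠ 0 := fun i => (_root_.map_ne_zero _).mpr (ha i)
  have hconst : ∏ i, -((starRingEnd ℂ) (a i) / a i) = -1 := by
    rw [prod_neg_div_eq_inv_prod_factor_zero ha hconj]
    simpa [hf, eval_prod, zero_pow hn0] using congrArg Inv.inv h0
  have reflect : ∀ x : ℂ, x ≠ 0 →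
      x ^ (2 * m * n) * fbar.eval ((zetaRoot (2 * n))⁻¹ * x⁻¹) = - f.eval x := by
    intro x hx
    have hu : ((zetaRoot (2 * n))⁻¹ * x⁻¹) ^ n = -(x ^ n)⁻¹ := by
      rw [mul_pow, inv_pow, inv_pow, zetaRoot_two_mul_pow_self hn0]
      ring
    have hx2 : x ^ (2 * m * n) = ((x ^ n) ^ 2) ^ Fintype.card (Fin m) := by
      rw [Fintype.card_fin, ← pow_mul, ← pow_mul]
      ring_nf
    simp only [hf, hfbar, eval_prod, eval_mul, eval_sub, eval_add, eval_pow, eval_X, eval_C, hu]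
    rw [hx2, pow_mul_prod_factor_neg_inv ha hconj (pow_ne_zero n hx), hconst, neg_one_mul]
  have hdvd2 : q ∣ 2 * m * n := by
    rw [mul_assoc]
    exact hdvd.mul_left 2
  exact ⟨reflect, fun x y hx hy => pow_eq_of_pow_mul_eq_neg hdvd2 hx
    (zetaRoot_two_mul_pow_self hq.ne_zero) hy (reflect x hx)⟩

/-- with `f(x) = ∏ᵢ (xⁿ − aᵢ)(xⁿ + 1/āᵢ)`, `f(0) = −1`, and `q` an odd prime
dividing `mn`, one has `x^{2mn}·f̄(ζ₂ₙ⁻¹x⁻¹) = −f(x)` for all `x ≠ 0`; consequently if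
`y^q = f(x)` with `x ≠ 0`, then `v^q = f̄(u)` for `u = ζ₂ₙ⁻¹x⁻¹`, `v = ζ₂q·y·x^{−2mn/q}`,
i.e. `μ` maps the affine curve `y^q = f(x)` into the conjugate curve `y^q = f̄(x)`. -/
theorem statement_13 (m n : ℕ) (hm : 2 ≤ m) (hn : 2 ≤ n)
    (a : Fin m → ℂ) (ha : ∀ i, a i ≠ 0)
    (q : ℕ) (hq : Nat.Prime q) (hodd : Odd q) (hdvd : q ∣ m * n)
    (f fbar : Polynomial ℂ)
    (hf : f = ∏ i : Fin m,
      ((Polynomial.X ^ n - Polynomial.C (a i)) *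
        (Polynomial.X ^ n + Polynomial.C ((starRingEnd ℂ) (a i))⁻¹)))
    (hfbar : fbar = ∏ i : Fin m,
      ((Polynomial.X ^ n - Polynomial.C ((starRingEnd ℂ) (a i))) *
        (Polynomial.X ^ n + Polynomial.C (a i)⁻¹)))
    (h0 : f.eval 0 = -1) :
    (∀ x : ℂ, x ≠ 0 →
      x ^ (2 * m * n) * fbar.eval ((zetaRoot (2 * n))⁻¹ * x⁻¹) = - f.eval x) ∧
    (∀ x y : ℂ, x ≠ 0 → y ^ q = f.eval x →
      (zetaRoot (2 * q) * y * x⁻¹ ^ (2 * m * n / q)) ^ q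
        = fbar.eval ((zetaRoot (2 * n))⁻¹ * x⁻¹)) :=
  statement_13_general m n hn a ha q hq hdvd f fbar hf hfbar h0

end
end

section
/- Let q be an odd prime dividing m·n. Define the following maps on (ℂ∖{0})×ℂ: μ(x,y) := (ζ_{2n}^{−1}·x^{−1}, ζ_{2q}·y·x^{−2mn/q}), ν(x,y) := (ζ_n·x, y), and their coefficient-conjugates μ̄(x,y) := (ζ_{2n}·x^{−1}, ζ_{2q}^{−1}·y·x^{−2mn/q}), ν̄(x,y) := (ζ_n^{−1}·x, y). Then for every integer k ≥ 0 and every (x,y) with x ≠ 0: (μ̄ ∘ ν̄^k)((μ ∘ ν^k)(x,y)) = (ζ_n^{2k+1}·x, ζ_n^{(2k+1)·mn/q}·y). Consequently this composite is the identity map if and only if n divides 2k+1; in particular, if n is odd it is the identity for k = (n−1)/2, while if n is even it is not the identity for any k. -/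
/-!
Both `μ ∘ νᵏ` and `μ̄ ∘ ν̄ᵏ` invert `x` and then rescale, so their composite multiplies `x` by
`ζ_{2n}² ζ_n^{2k} = ζ_n^{2k+1}`, while the two twists of `y` by `x^{-2mn/q}` cancel up to the factor
`(ζ_{2n} ζ_nᵏ)^{2mn/q} = ζ_n^{(2k+1)mn/q}`, the exponent being `2 · (mn/q)` as `q ∣ mn`. Since `ζ_n`
is a primitive `n`-th root of unity, the composite is the identity iff `n ∣ 2k+1`.
-/

open Complex

noncomputable section

lemma zetaRoot_ne_zero (r : ℕ) : zetaRoot r ≠ 0 := Complex.exp_ne_zero _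

lemma zetaRoot_two_mul_sq (n : ℕ) : zetaRoot (2 * n) ^ 2 = zetaRoot n := by
  rw [zetaRoot, zetaRoot, ← Complex.exp_nat_mul]
  congr 1
  push_cast
  rw [mul_div_assoc', mul_div_mul_left _ _ two_ne_zero]

lemma zetaRoot_isPrimitiveRoot {n : ℕ} (hn : n ≠ 0) : IsPrimitiveRoot (zetaRoot n) n :=
  Complex.isPrimitiveRoot_exp n hn

section Maps

variable {K : Type*} [Field K]

def scaleFst (c : K) (p : K × K) : K × K := (c * p.1, p.2)

/-- The common shape of `μ` and `μ̄`. -/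
def invTwist (a b : K) (e : ℕ) (p : K × K) : K × K := (a * p.1⁻¹, b * p.2 * p.1⁻¹ ^ e)

lemma scaleFst_iterate (c : K) (k : ℕ) : (scaleFst c)^[k] = scaleFst (c ^ k) := by
  induction k with
  | zero => funext p; simp [scaleFst]
  | succ k ih =>
    funext p
    rw [Function.iterate_succ_apply', ih]
    simp only [scaleFst, pow_succ', mul_assoc]

lemma invTwist_scaleFst_invTwist_scaleFst {a b c a' b' c' x : K} (hc : c ≠ 0) (hx : x ≠ 0)
    (e : ℕ) (y : K) :
    invTwist a' b' e (scaleFst c' (invTwist a b e (scaleFst c (x, y)))) =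
      (a' * (a * c')⁻¹ * c * x, b' * b * (c' * a)⁻¹ ^ e * y) := by
  simp only [invTwist, scaleFst, Prod.mk.injEq]
  constructor
  · field_simp
  · simp only [inv_pow, mul_inv, inv_inv, mul_pow]
    field_simp

lemma weil_cocycle_apply {ξ ζ η x : K} (hξζ : ξ ^ 2 = ζ) (hξ : ξ ≠ 0) (hη : η ≠ 0)
    (hx : x ≠ 0) (d k : ℕ) (y : K) :
    (invTwist ξ η⁻¹ (2 * d) ∘ (scaleFst ζ⁻¹)^[k])
        ((invTwist ξ⁻¹ η (2 * d) ∘ (scaleFst ζ)^[k]) (x, y)) =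
      (ζ ^ (2 * k + 1) * x, ζ ^ ((2 * k + 1) * d) * y) := by
  have hζ : ζ ≠ 0 := hξζ ▸ pow_ne_zero 2 hξ
  simp only [Function.comp_apply, scaleFst_iterate]
  rw [invTwist_scaleFst_invTwist_scaleFst (pow_ne_zero k hζ) hx, inv_mul_cancel₀ hη, one_mul, ← hξζ]
  simp only [inv_pow, mul_inv, inv_inv, Prod.mk.injEq]
  constructor <;> ring

lemma scale_pow_eq_self_iff_dvd {ζ : K} {n : ℕ} (hζ : IsPrimitiveRoot ζ n) (j d : ℕ) :
    (∀ x y : K, x ≠ 0 → (ζ ^ j * x, ζ ^ (j * d) * y) = (x, y)) ↔ n ∣ j := by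
  rw [← hζ.pow_eq_one_iff_dvd]
  constructor
  · intro h
    simpa using congrArg Prod.fst (h 1 1 one_ne_zero)
  · intro h x y _
    rw [pow_mul, h, one_pow, one_mul, one_mul]

end Maps

theorem statement_14_general (m n : ℕ) (hn : 2 ≤ n)
    (q : ℕ) (hdvd : q ∣ m * n)
    (μ ν μbar νbar : ℂ × ℂ → ℂ × ℂ)
    (hμ : μ = fun p => ((zetaRoot (2 * n))⁻¹ * p.1⁻¹,
      zetaRoot (2 * q) * p.2 * p.1⁻¹ ^ (2 * m * n / q)))
    (hν : ν = fun p => (zetaRoot n * p.1, p.2))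
    (hμbar : μbar = fun p => (zetaRoot (2 * n) * p.1⁻¹,
      (zetaRoot (2 * q))⁻¹ * p.2 * p.1⁻¹ ^ (2 * m * n / q)))
    (hνbar : νbar = fun p => ((zetaRoot n)⁻¹ * p.1, p.2)) :
    (∀ k : ℕ, ∀ x y : ℂ, x ≠ 0 →
      (μbar ∘ νbar^[k]) ((μ ∘ ν^[k]) (x, y)) =
        (zetaRoot n ^ (2 * k + 1) * x, zetaRoot n ^ ((2 * k + 1) * (m * n) / q) * y)) ∧
    (∀ k : ℕ,
      (∀ x y : ℂ, x ≠ 0 → (μbar ∘ νbar^[k]) ((μ ∘ ν^[k]) (x, y)) = (x, y)) ↔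
        n ∣ 2 * k + 1) ∧
    (Odd n → ∀ x y : ℂ, x ≠ 0 →
      (μbar ∘ νbar^[(n - 1) / 2]) ((μ ∘ ν^[(n - 1) / 2]) (x, y)) = (x, y)) ∧
    (Even n → ∀ k : ℕ,
      ¬ ∀ x y : ℂ, x ≠ 0 → (μbar ∘ νbar^[k]) ((μ ∘ ν^[k]) (x, y)) = (x, y)) := by
  have hexp : 2 * m * n / q = 2 * (m * n / q) := by rw [mul_assoc, Nat.mul_div_assoc 2 hdvd]
  have cocycle (k : ℕ) (x y : ℂ) (hx : x ≠ 0) :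
      (μbar ∘ νbar^[k]) ((μ ∘ ν^[k]) (x, y)) =
        (zetaRoot n ^ (2 * k + 1) * x, zetaRoot n ^ ((2 * k + 1) * (m * n / q)) * y) := by
    rw [hexp] at hμ hμbar
    subst hμ hν hμbar hνbar
    exact weil_cocycle_apply (zetaRoot_two_mul_sq n) (zetaRoot_ne_zero _) (zetaRoot_ne_zero _) hx
      _ k y
  have isId_iff (k : ℕ) :
      (∀ x y : ℂ, x ≠ 0 → (μbar ∘ νbar^[k]) ((μ ∘ ν^[k]) (x, y)) = (x, y)) ↔ n ∣ 2 * k + 1 := by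
    rw [← scale_pow_eq_self_iff_dvd (zetaRoot_isPrimitiveRoot (by omega)) _ (m * n / q)]
    exact forall₃_congr fun x y hx => by rw [cocycle k x y hx]
  refine ⟨fun k x y hx => ?_, isId_iff, fun hodd => (isId_iff _).mpr ?_, fun heven k h => ?_⟩
  · rw [Nat.mul_div_assoc _ hdvd]
    exact cocycle k x y hx
  · obtain ⟨j, rfl⟩ := hodd
    exact ⟨1, by omega⟩
  · exact Nat.not_even_two_mul_add_one k
      (even_iff_two_dvd.mpr (heven.two_dvd.trans ((isId_iff k).mp h)))

/-- Weil's cocycle computation: with `μ, ν` and their coefficient-conjugates as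
below, `(μ̄ ∘ ν̄^k)((μ ∘ ν^k)(x,y)) = (ζₙ^{2k+1}x, ζₙ^{(2k+1)mn/q}y)` for `x ≠ 0`; this
composite is the identity (on `x ≠ 0`) iff `n ∣ 2k+1`; in particular for `n` odd it is the
identity when `k = (n−1)/2`, and for `n` even it is never the identity. -/
theorem statement_14 (m n : ℕ) (hm : 2 ≤ m) (hn : 2 ≤ n)
    (q : ℕ) (hq : Nat.Prime q) (hodd : Odd q) (hdvd : q ∣ m * n)
    (μ ν μbar νbar : ℂ × ℂ → ℂ × ℂ)
    (hμ : μ = fun p => ((zetaRoot (2 * n))⁻¹ * p.1⁻¹,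
      zetaRoot (2 * q) * p.2 * p.1⁻¹ ^ (2 * m * n / q)))
    (hν : ν = fun p => (zetaRoot n * p.1, p.2))
    (hμbar : μbar = fun p => (zetaRoot (2 * n) * p.1⁻¹,
      (zetaRoot (2 * q))⁻¹ * p.2 * p.1⁻¹ ^ (2 * m * n / q)))
    (hνbar : νbar = fun p => ((zetaRoot n)⁻¹ * p.1, p.2)) :
    (∀ k : ℕ, ∀ x y : ℂ, x ≠ 0 →
      (μbar ∘ νbar^[k]) ((μ ∘ ν^[k]) (x, y)) =
        (zetaRoot n ^ (2 * k + 1) * x, zetaRoot n ^ ((2 * k + 1) * (m * n) / q) * y)) ∧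
    (∀ k : ℕ,
      (∀ x y : ℂ, x ≠ 0 → (μbar ∘ νbar^[k]) ((μ ∘ ν^[k]) (x, y)) = (x, y)) ↔
        n ∣ 2 * k + 1) ∧
    (Odd n → ∀ x y : ℂ, x ≠ 0 →
      (μbar ∘ νbar^[(n - 1) / 2]) ((μ ∘ ν^[(n - 1) / 2]) (x, y)) = (x, y)) ∧
    (Even n → ∀ k : ℕ,
      ¬ ∀ x y : ℂ, x ≠ 0 → (μbar ∘ νbar^[k]) ((μ ∘ ν^[k]) (x, y)) = (x, y)) :=
  statement_14_general m n hn q hdvd μ ν μbar νbar hμ hν hμbar hνbar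
end
end
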